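/- Let λ ≥ 1, let X₁,…,X_T be vectors in ℝ^d with ‖X_t‖₂ ≤ 1 for all t, and define V_t = λI_d + Σ_{i=1}^t XᵢXᵢᵀ. Then Σ_{t=1}^T ‖X_t‖²_{V_{t−1}^{−1}} ≤ 2d log(1 + T/(dλ)). -/

import Mathlib

/-!
By the matrix determinant lemma, `det V_{t+1} = det V_t * (1 + ‖X_t‖²_{V_t⁻¹})`, so the terms
`log (1 + ‖X_t‖²_{V_t⁻¹})` telescope to `log (det V_T / det V_0)`. Since `V_t ≥ λ I` with `λ ≥ 1`
and `‖X_t‖ ≤ 1`, every `‖X_t‖²_{V_t⁻¹}` lies in `[0, 1]`, where `u ≤ 2 log (1 + u)`. Finally,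
AM-GM on the eigenvalues gives `det V_T ≤ (tr V_T / d) ^ d ≤ (λ + T / d) ^ d`.
-/

open Matrix

theorem Real.le_two_mul_log_one_add {u : ℝ} (h0 : 0 ≤ u) (h1 : u ≤ 1) :
    u ≤ 2 * Real.log (1 + u) := by
  have hlog := Real.one_sub_inv_le_log_of_pos (x := 1 + u) (by linarith)
  have hsub : 1 - (1 + u)⁻¹ = u / (1 + u) := by field_simp; ring
  have hhalf : u / 2 ≤ u / (1 + u) := div_le_div_of_nonneg_left h0 (by linarith) (by linarith)
  linarith

theorem Real.prod_le_sum_div_card_pow {ι : Type*} (s : Finset ι) {z : ι → ℝ}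
    (hz : ∀ i ∈ s, 0 ≤ z i) : ∏ i ∈ s, z i ≤ ((∑ i ∈ s, z i) / s.card) ^ s.card := by
  rcases s.eq_empty_or_nonempty with rfl | hs
  · simp
  have hk : s.card ≠ 0 := hs.card_pos.ne'
  have amgm := Real.geom_mean_le_arith_mean_weighted s (fun _ => (s.card : ℝ)⁻¹) z
    (fun _ _ => by positivity) (by simp [hk]) hz
  rw [Real.finsetProd_rpow s z hz, ← Finset.mul_sum, inv_mul_eq_div] at amgm
  calc ∏ i ∈ s, z i = ((∏ i ∈ s, z i) ^ ((s.card : ℝ)⁻¹)) ^ s.card :=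
        (Real.rpow_inv_natCast_pow (Finset.prod_nonneg hz) hk).symm
    _ ≤ _ := pow_le_pow_left₀ (Real.rpow_nonneg (Finset.prod_nonneg hz) _) amgm _

namespace Matrix

variable {n : Type*} [Fintype n] [DecidableEq n]

theorem PosSemidef.det_le_trace_div_card_pow {M : Matrix n n ℝ} (hM : M.PosSemidef) :
    M.det ≤ (M.trace / Fintype.card n) ^ Fintype.card n := by
  rw [hM.isHermitian.det_eq_prod_eigenvalues, hM.isHermitian.trace_eq_sum_eigenvalues]
  simpa using Real.prod_le_sum_div_card_pow Finset.univ fun i _ => hM.eigenvalues_nonneg i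

theorem det_add_vecMulVec {R : Type*} [CommRing R] {A : Matrix n n R} (hA : IsUnit A.det)
    (u v : n → R) : (A + vecMulVec u v).det = A.det * (1 + v ⬝ᵥ A⁻¹ *ᵥ u) := by
  rw [vecMulVec_eq Unit, det_add_replicateCol_mul_replicateRow hA, det_unique (n := Unit)]
  rw [add_apply, one_apply_eq, ← replicateRow_vecMul, replicateRow_mul_replicateCol_apply,
    ← dotProduct_mulVec]

omit [Fintype n] in
theorem PosSemidef.posDef_of_sub_smul_one {V : Matrix n n ℝ} {c : ℝ} (hc : 0 < c)
    (hV : (V - c • 1).PosSemidef) : V.PosDef := by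
  simpa using PosDef.posSemidef_add hV (PosDef.one.smul hc)

theorem PosDef.dotProduct_inv_mulVec_nonneg {V : Matrix n n ℝ} (hV : V.PosDef) (x : n → ℝ) :
    0 ≤ x ⬝ᵥ V⁻¹ *ᵥ x := by
  simpa using hV.inv.posSemidef.dotProduct_mulVec_nonneg x

theorem dotProduct_inv_mulVec_le {V : Matrix n n ℝ} {c : ℝ} (hc : 0 < c)
    (hV : (V - c • 1).PosSemidef) (x : n → ℝ) : x ⬝ᵥ V⁻¹ *ᵥ x ≤ (x ⬝ᵥ x) / c := by
  set y := V⁻¹ *ᵥ x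
  have hVy : V *ᵥ y = x := by
    have hdet := (hV.posDef_of_sub_smul_one hc).det_pos
    rw [mulVec_mulVec, mul_nonsing_inv _ hdet.ne'.isUnit, one_mulVec]
  have hyV : c * (y ⬝ᵥ y) ≤ x ⬝ᵥ y := by
    have := hV.dotProduct_mulVec_nonneg y
    simp only [star_trivial, sub_mulVec, dotProduct_sub, smul_mulVec, one_mulVec,
        dotProduct_smul, smul_eq_mul, hVy] at this
    linarith [dotProduct_comm x y]
  have hcs : (x ⬝ᵥ y) ^ 2 ≤ (x ⬝ᵥ x) * (y ⬝ᵥ y) := by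
    simpa only [dotProduct, sq] using Finset.sum_mul_sq_le_sq_mul_sq Finset.univ x y
  have hxx : 0 ≤ x ⬝ᵥ x := Finset.sum_nonneg fun i _ => mul_self_nonneg _
  have hyy : 0 ≤ y ⬝ᵥ y := Finset.sum_nonneg fun i _ => mul_self_nonneg _
  rw [le_div_iff₀ hc]
  by_contra! h
  have hu : 0 < x ⬝ᵥ y := by nlinarith
  nlinarith [mul_le_mul_of_nonneg_left hyV hxx, mul_le_mul_of_nonneg_right hcs hc.le,
    mul_lt_mul_of_pos_left h hu]

end Matrix

namespace EllipticalPotential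

variable {n : Type*} [Fintype n] {T : ℕ} {X : Fin T → n → ℝ}
  {V : ℕ → Matrix n n ℝ}

theorem posSemidef_sub_initial
    (hVs : ∀ t : Fin T, V (t.val + 1) = V t.val + vecMulVec (X t) (X t)) :
    ∀ t ≤ T, (V t - V 0).PosSemidef
  | 0, _ => by simpa using PosSemidef.zero
  | t + 1, ht => by
    rw [hVs ⟨t, ht⟩, add_sub_right_comm]
    exact (posSemidef_sub_initial hVs t (by omega)).add (posSemidef_vecMulVec_self_star (X _))

theorem trace_le (hX : ∀ t, X t ⬝ᵥ X t ≤ 1)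
    (hVs : ∀ t : Fin T, V (t.val + 1) = V t.val + vecMulVec (X t) (X t)) :
    ∀ t ≤ T, (V t).trace ≤ (V 0).trace + t
  | 0, _ => by simp
  | t + 1, ht => by
    rw [hVs ⟨t, ht⟩, trace_add, trace_vecMulVec]
    push_cast
    linarith [trace_le hX hVs t (by omega), hX ⟨t, ht⟩]

theorem posDef (h0 : (V 0).PosDef)
    (hVs : ∀ t : Fin T, V (t.val + 1) = V t.val + vecMulVec (X t) (X t)) :
    ∀ t ≤ T, (V t).PosDef := fun t ht => by
  simpa using PosDef.posSemidef_add (posSemidef_sub_initial hVs t ht) h0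

theorem det_le [DecidableEq n] (h0 : (V 0).PosDef) (hX : ∀ t, X t ⬝ᵥ X t ≤ 1)
    (hVs : ∀ t : Fin T, V (t.val + 1) = V t.val + vecMulVec (X t) (X t)) :
    (V T).det ≤ (((V 0).trace + T) / Fintype.card n) ^ Fintype.card n := by
  have hpsd := (posDef h0 hVs T le_rfl).posSemidef
  refine hpsd.det_le_trace_div_card_pow.trans ?_
  gcongr
  · exact div_nonneg hpsd.trace_nonneg (Nat.cast_nonneg _)
  · exact trace_le hX hVs T le_rfl

theorem sum_log_one_add_eq [DecidableEq n] (h0 : (V 0).PosDef)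
    (hVs : ∀ t : Fin T, V (t.val + 1) = V t.val + vecMulVec (X t) (X t)) :
    ∑ t : Fin T, Real.log (1 + X t ⬝ᵥ (V t)⁻¹ *ᵥ X t)
      = Real.log (V T).det - Real.log (V 0).det := by
  have hstep : ∀ t : Fin T, Real.log (1 + X t ⬝ᵥ (V t)⁻¹ *ᵥ X t)
      = Real.log (V (t + 1)).det - Real.log (V t).det := fun t => by
    have hV := posDef h0 hVs t t.2.le
    have h1u : 0 < 1 + X t ⬝ᵥ (V t)⁻¹ *ᵥ X t := by
      linarith [hV.dotProduct_inv_mulVec_nonneg (X t)]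
    rw [hVs, det_add_vecMulVec hV.det_pos.ne'.isUnit, Real.log_mul hV.det_pos.ne' h1u.ne']
    ring
  rw [Finset.sum_congr rfl fun t _ => hstep t,
    Fin.sum_univ_eq_sum_range (fun t => Real.log (V (t + 1)).det - Real.log (V t).det)]
  exact Finset.sum_range_sub (fun t => Real.log (V t).det) T

end EllipticalPotential

open EllipticalPotential

theorem stmt_4_general (d T : ℕ) (lam : ℝ) (hlam : 1 ≤ lam)
    (X : Fin T → Fin d → ℝ)
    (hX : ∀ t, Real.sqrt (X t ⬝ᵥ X t) ≤ 1)
    (V : ℕ → Matrix (Fin d) (Fin d) ℝ)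
    (hV0 : V 0 = lam • (1 : Matrix (Fin d) (Fin d) ℝ))
    (hVs : ∀ t : Fin T, V (t.val + 1) = V t.val + vecMulVec (X t) (X t)) :
    ∑ t : Fin T, X t ⬝ᵥ (V t.val)⁻¹.mulVec (X t)
      ≤ 2 * d * Real.log (1 + T / (d * lam)) := by
  have hlam0 : 0 < lam := by linarith
  have hX1 : ∀ t, X t ⬝ᵥ X t ≤ 1 := fun t => Real.sqrt_le_one.mp (hX t)
  have hV0pd : (V 0).PosDef := hV0 ▸ PosDef.one.smul hlam0
  have hsub : ∀ t ≤ T, (V t - lam • 1).PosSemidef := hV0 ▸ posSemidef_sub_initial hVs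
  have hterm : ∀ t : Fin T, X t ⬝ᵥ (V t)⁻¹ *ᵥ X t ≤ 1 := fun t =>
    (dotProduct_inv_mulVec_le hlam0 (hsub t t.2.le) (X t)).trans <|
      div_le_one_of_le₀ ((hX1 t).trans hlam) hlam0.le
  have hdet : (V T).det ≤ (lam + T / d) ^ d := by
    have h := det_le hV0pd hX1 hVs
    rw [hV0, trace_smul, trace_one, Fintype.card_fin, smul_eq_mul, add_div] at h
    rcases eq_or_ne d 0 with rfl | hd
    · simp
    · rwa [mul_div_cancel_right₀ _ (Nat.cast_ne_zero.mpr hd)] at h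
  calc ∑ t : Fin T, X t ⬝ᵥ (V t)⁻¹ *ᵥ X t
      ≤ ∑ t : Fin T, 2 * Real.log (1 + X t ⬝ᵥ (V t)⁻¹ *ᵥ X t) :=
        Finset.sum_le_sum fun t _ => Real.le_two_mul_log_one_add
          ((posDef hV0pd hVs t t.2.le).dotProduct_inv_mulVec_nonneg _) (hterm t)
    _ = 2 * (Real.log (V T).det - Real.log (V 0).det) := by
        rw [← Finset.mul_sum, sum_log_one_add_eq hV0pd hVs]
    _ ≤ 2 * (d * Real.log (lam + T / d) - d * Real.log lam) := by
        rw [hV0, det_smul, det_one, mul_one, Fintype.card_fin, Real.log_pow]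
        gcongr
        rw [← Real.log_pow]
        exact Real.log_le_log (posDef hV0pd hVs T le_rfl).det_pos hdet
    _ = 2 * d * Real.log (1 + T / (d * lam)) := by
        rw [mul_assoc, ← mul_sub, ← Real.log_div (by positivity) hlam0.ne', add_div,
          div_self hlam0.ne', div_div]

/-- Elliptical potential lemma: with `λ ≥ 1`, `‖X_t‖₂ ≤ 1`, `V_t = λI + Σ_{i≤t} XᵢXᵢᵀ`,
`Σ_{t=1}^T ‖X_t‖²_{V_{t-1}⁻¹} ≤ 2 d log(1 + T/(dλ))`. Here `V t.val` is `V_{t-1}`. -/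
theorem stmt_4 (d T : ℕ) (hd : 0 < d) (lam : ℝ) (hlam : 1 ≤ lam)
    (X : Fin T → Fin d → ℝ)
    (hX : ∀ t, Real.sqrt (X t ⬝ᵥ X t) ≤ 1)
    (V : ℕ → Matrix (Fin d) (Fin d) ℝ)
    (hV0 : V 0 = lam • (1 : Matrix (Fin d) (Fin d) ℝ))
    (hVs : ∀ t : Fin T, V (t.val + 1) = V t.val + vecMulVec (X t) (X t)) :
    ∑ t : Fin T, X t ⬝ᵥ (V t.val)⁻¹.mulVec (X t)
      ≤ 2 * d * Real.log (1 + T / (d * lam)) :=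
  stmt_4_general d T lam hlam X hX V hV0 hVs
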